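/- Any two nonempty regular closed subsets of the five-point space T have nonempty intersection; in fact every nonempty regular closed subset of T contains the point b. -/

import Mathlib

/-- The five-point space `T = {x, y, z, a, b}` (five pairwise distinct points). -/
inductive Pt : Type
  | x | y | z | a | b
deriving DecidableEq

open Pt

/-- The topology on `T` generated by the subbasis `{x,z}`, `{y,z}`, `{x,a,y}`. -/
instance : TopologicalSpace Pt :=
  TopologicalSpace.generateFrom ({{x, z}, {y, z}, {x, a, y}} : Set (Set Pt))

/-! The point `b` lies in no subbasic open set, so its only neighbourhood is the whole space.
Hence `b` is in the closure of every nonempty set, in particular in `closure (interior A)`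
whenever this set is nonempty. -/

open Filter Topology

theorem TopologicalSpace.nhds_generateFrom_eq_top {α : Type*} {g : Set (Set α)} {p : α}
    (h : ∀ s ∈ g, p ∉ s) : @nhds α (generateFrom g) p = ⊤ := by
  rw [nhds_generateFrom]
  exact iInf₂_eq_top.2 fun s hs => absurd hs.1 (h s hs.2)

section NhdsEqTop

variable {α : Type*} [TopologicalSpace α] {p : α}

theorem mem_closure_of_nhds_eq_top (hp : 𝓝 p = ⊤) {s : Set α} (hs : s.Nonempty) :
    p ∈ closure s := by
  rw [mem_closure_iff_clusterPt, ClusterPt, hp, top_inf_eq]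
  exact principal_neBot_iff.2 hs

theorem mem_of_eq_closure_interior_of_nhds_eq_top (hp : 𝓝 p = ⊤) {A : Set α}
    (hA : A = closure (interior A)) (hne : A.Nonempty) : p ∈ A := by
  have hint : (interior A).Nonempty := by
    rw [hA] at hne
    exact closure_nonempty_iff.1 hne
  rw [hA]
  exact mem_closure_of_nhds_eq_top hp hint

end NhdsEqTop

theorem Pt.nhds_b : 𝓝 b = ⊤ :=
  TopologicalSpace.nhds_generateFrom_eq_top (by simp)

/-- Any two nonempty regular closed subsets of T have nonempty
intersection; in fact every nonempty regular closed subset of T contains b. -/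
theorem stmt5 :
    (∀ A B : Set Pt, A = closure (interior A) → B = closure (interior B) →
      A.Nonempty → B.Nonempty → (A ∩ B).Nonempty) ∧
    (∀ A : Set Pt, A = closure (interior A) → A.Nonempty → b ∈ A) := by
  have mem_b : ∀ A : Set Pt, A = closure (interior A) → A.Nonempty → b ∈ A :=
    fun _ => mem_of_eq_closure_interior_of_nhds_eq_top Pt.nhds_b
  exact ⟨fun A B hA hB hAne hBne => ⟨b, mem_b A hA hAne, mem_b B hB hBne⟩, mem_b⟩
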